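/- Under the blanket assumptions with block structure f(x) = Σ_{i=1}^N f_i(x_i), assume the level set X := {x: F(x) ≤ F(x⁰)} is nonempty and compact, fix α̲ > 0, and let S := {(x,y) ∈ X × 𝒴: η(x,y) > 0}, where ḡ := sup_{z∈X} g(z), X_{α̲} := {z: dist²(z,X) ≤ ḡ/α̲} and 𝒴 := ∪_{z ∈ X_{α̲}} ∂g(z). Then for every σ > 0 there exists ᾱ > 0 such that: for every (x,y) ∈ S with Q(x,y) ≤ F(x⁰), every α ∈ (0,ᾱ), every block index i ∈ {1,…,N}, every x⁺_i ∈ prox_{αf_i}(x_i − α∇_i h(x) + α Q(x,y) y_i), and every real c ≥ Q(x,y), the vector x⁺ obtained from x by replacing its i-th block with x⁺_i satisfies ζ(x⁺) + (σ/2)‖x⁺ − x‖₂² ≤ c·η(x⁺, y). -/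

import Mathlib

/-!
Compactness of the level set `X` makes every constant uniform. Around each point of `X` the
gradient of `h` is Lipschitz on a ball, and a Lebesgue number of this cover gives one radius `δ`
and one constant `L` with `h (x + e) ≤ h x + ⟪∇h x, e⟫ + L/2 ‖e‖²` for all `x ∈ X`, `‖e‖ < δ`.
Continuity bounds `∇h` on `X`, `f ≤ F(x⁰) g - h` bounds `f` on `X`, and `𝒴` is bounded because
the subgradients of a continuous convex function are bounded on bounded sets.

For a block step `d = x⁺ᵢ - xᵢ` the prox inequality gives `‖d‖² = O(α)`, hence `‖d‖ < δ` for
small `α`. Adding the prox inequality to the descent inequality and using `ζ(x) = Q η(x, y)` gives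
`ζ(x⁺) + (1/α - L)/2 ‖d‖² ≤ Q η(x⁺, y)`, i.e. the claim for `c = Q` once `α (L + σ) < 1`. It
passes to every `c ≥ Q` because `η(x⁺, y) < 0` would force `d = 0` and so `η(x⁺, y) = η(x, y) > 0`.
-/

open Filter Topology Set
open scoped RealInnerProductSpace Pointwise NNReal

noncomputable section

namespace Paper

variable {E : Type*} [NormedAddCommGroup E] [InnerProductSpace ℝ E]

/-- The effective domain of an extended-real-valued function. -/
def edom (φ : E → EReal) : Set E := {x | φ x ≠ ⊤}

/-- A function with values in `(-∞, +∞]` is proper if it is not identically `+∞`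
and never takes the value `-∞`. -/
def Proper (φ : E → EReal) : Prop := (∃ x, φ x ≠ ⊤) ∧ ∀ x, φ x ≠ ⊥

/-- The Fréchet subdifferential of `φ` at `x`. -/
def frSubdiff (φ : E → EReal) (x : E) : Set E :=
  {y | φ x ≠ ⊤ ∧ 0 ≤ Filter.liminf
      (fun z : E => (φ z - φ x - ((⟪y, z - x⟫ : ℝ) : EReal)) * ((‖z - x‖⁻¹ : ℝ) : EReal))
      (𝓝[≠] x)}

/-- The limiting (Mordukhovich) subdifferential of `φ` at `x`. -/
def limSubdiff (φ : E → EReal) (x : E) : Set E :=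
  {y | ∃ u v : ℕ → E,
      Tendsto u atTop (𝓝 x) ∧ Tendsto (fun k => φ (u k)) atTop (𝓝 (φ x)) ∧
      (∀ k, v k ∈ frSubdiff φ (u k)) ∧ Tendsto v atTop (𝓝 y)}

/-- The convex subdifferential of a real-valued function. -/
def cvxSubdiff (g : E → ℝ) (x : E) : Set E :=
  {y | ∀ z, g x + ⟪y, z - x⟫ ≤ g z}

/-- The convex subdifferential of an extended-real-valued function. -/
def cvxSubdiffE (φ : E → EReal) (x : E) : Set E :=
  {y | ∀ z, φ x + ((⟪y, z - x⟫ : ℝ) : EReal) ≤ φ z}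

/-- The Fenchel conjugate of an extended-real-valued function. -/
def fconjE (φ : E → EReal) : E → EReal :=
  fun y => ⨆ x : E, (((⟪x, y⟫ : ℝ) : EReal) - φ x)

/-- The Fenchel conjugate of a real-valued function. -/
def fconj (g : E → ℝ) : E → EReal := fconjE (fun x => ((g x : ℝ) : EReal))

/-- `φ` satisfies the calmness condition at `x` relative to `A`. -/
def CalmAt (φ : E → EReal) (x : E) (A : Set E) : Prop :=
  ∃ κ : ℝ, 0 < κ ∧ ∃ B ∈ 𝓝 x, ∀ u ∈ B ∩ A,
    φ u ≤ φ x + ((κ * ‖u - x‖ : ℝ) : EReal) ∧ φ x ≤ φ u + ((κ * ‖u - x‖ : ℝ) : EReal)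

/-- `φ` satisfies the calmness condition on `A`. -/
def CalmOn (φ : E → EReal) (A : Set E) : Prop := ∀ x ∈ A, CalmAt φ x A

/-- The Kurdyka–Łojasiewicz property of `φ` at `x`. -/
def KLAt (φ : E → EReal) (x : E) : Prop :=
  ∃ ε > (0 : ℝ), ∃ δ > (0 : ℝ), ∃ ϕ ϕ' : ℝ → ℝ,
    ϕ 0 = 0 ∧ ContinuousOn ϕ (Set.Ico 0 ε) ∧ ConcaveOn ℝ (Set.Ico 0 ε) ϕ ∧
    (∀ s ∈ Set.Ioo (0 : ℝ) ε, HasDerivAt ϕ (ϕ' s) s) ∧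
    ContinuousOn ϕ' (Set.Ioo 0 ε) ∧ (∀ s ∈ Set.Ioo (0 : ℝ) ε, 0 < ϕ' s) ∧
    ∀ z ∈ Metric.ball x δ, φ x < φ z → φ z < φ x + (ε : EReal) →
      1 ≤ ENNReal.ofReal (ϕ' ((φ z).toReal - (φ x).toReal)) *
        EMetric.infEdist (0 : E) (limSubdiff φ z)

/-- The KL property of `φ` at `x` with exponent `θ`. -/
def KLExpAt (φ : E → EReal) (x : E) (θ : ℝ) : Prop :=
  ∃ c > (0 : ℝ), ∃ ε > (0 : ℝ), ∃ δ > (0 : ℝ),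
    ∀ z ∈ Metric.ball x δ, φ x < φ z → φ z < φ x + (ε : EReal) →
      ENNReal.ofReal (c * ((φ z).toReal - (φ x).toReal) ^ θ) ≤
        EMetric.infEdist (0 : E) (limSubdiff φ z)

/-- The (possibly multivalued) proximity operator of `φ`. -/
def proxSet (φ : E → EReal) (u : E) : Set E :=
  {z | ∀ w, φ z + ((‖z - u‖ ^ 2 / 2 : ℝ) : EReal) ≤ φ w + ((‖w - u‖ ^ 2 / 2 : ℝ) : EReal)}

/-- A positive scaling of an extended-real-valued function. -/
def scaleE (α : ℝ) (φ : E → EReal) : E → EReal := fun x => ((α : ℝ) : EReal) * φ x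

/-- `h` is locally Lipschitz differentiable on `s`. -/
def LocLipGradOn [CompleteSpace E] (h : E → ℝ) (s : Set E) : Prop :=
  (∀ x ∈ s, DifferentiableAt ℝ h x) ∧
  ∀ x ∈ s, ∃ U ∈ 𝓝 x, ∃ L : ℝ, ∀ u ∈ U ∩ s, ∀ v ∈ U ∩ s,
    ‖gradient h u - gradient h v‖ ≤ L * ‖u - v‖

/-- The numerator `ζ = f + h`. -/
def zeta (f : E → EReal) (h : E → ℝ) (x : E) : EReal := f x + ((h x : ℝ) : EReal)

/-- `η(x,y) = ⟨x,y⟩ − g^*(y)`. -/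
def eta (g : E → ℝ) (x y : E) : EReal := ((⟪x, y⟫ : ℝ) : EReal) - fconj g y

/-- The extended objective of the fractional problem. -/
def Ffun (f : E → EReal) (g h : E → ℝ) (x : E) : EReal :=
  if g x ≠ 0 ∧ f x ≠ ⊤ then ((((f x).toReal + h x) / g x : ℝ) : EReal) else ⊤

/-- The extended objective of the reformulated problem. -/
def Qfun (f : E → EReal) (g h : E → ℝ) (x y : E) : EReal :=
  if f x ≠ ⊤ ∧ 0 < eta g x y then
    ((((f x).toReal + h x) / (eta g x y).toReal : ℝ) : EReal) else ⊤

/-- Pack a pair into the `ℓ²` product space. -/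
def mk2 (x y : E) : WithLp 2 (E × E) := (WithLp.equiv 2 (E × E)).symm (x, y)

def pr1 (p : WithLp 2 (E × E)) : E := (WithLp.equiv 2 (E × E) p).1

def pr2 (p : WithLp 2 (E × E)) : E := (WithLp.equiv 2 (E × E) p).2

/-- `Q` as a function on the `ℓ²` product space. -/
def Qpair (f : E → EReal) (g h : E → ℝ) (p : WithLp 2 (E × E)) : EReal :=
  Qfun f g h (pr1 p) (pr2 p)

/-- The blanket assumptions of the paper. -/
structure Blanket [CompleteSpace E] (f : E → EReal) (g h : E → ℝ) : Prop where
  f_proper : Proper f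
  f_lsc : LowerSemicontinuous f
  f_cont : ContinuousOn f (edom f)
  f_bddBelow : ∃ m : ℝ, ∀ x, (m : EReal) ≤ f x
  h_lsc : LowerSemicontinuous h
  h_diff : LocLipGradOn h {x | g x ≠ 0}
  g_convex : ConvexOn ℝ Set.univ g
  g_nonneg : ∀ x, 0 ≤ g x
  omega_nonempty : ∃ x, g x ≠ 0
  zeta_nonneg : ∀ x, f x ≠ ⊤ → 0 ≤ zeta f h x

/-- `x` is a critical point of `F`: `0 ∈ ∂̂f(x) + ∇h(x) − F(x)·∂g(x)`. -/
def IsCritF [CompleteSpace E] (f : E → EReal) (g h : E → ℝ) (x : E) : Prop :=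
  g x ≠ 0 ∧ f x ≠ ⊤ ∧
  ∃ u ∈ frSubdiff f x, ∃ v ∈ cvxSubdiff g x,
    u + gradient h x - (Ffun f g h x).toReal • v = 0

/-- The level set `X = {x : F(x) ≤ F(x⁰)}`. -/
def lvlSet (f : E → EReal) (g h : E → ℝ) (x0 : E) : Set E :=
  {x | Ffun f g h x ≤ Ffun f g h x0}

/-- The enlargement `X_{α̲}` of the level set. -/
def Xal (f : E → EReal) (g h : E → ℝ) (x0 : E) (αl : ℝ) : Set E :=
  {z | (Metric.infDist z (lvlSet f g h x0)) ^ 2 ≤ sSup (g '' lvlSet f g h x0) / αl}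

/-- The compact set `𝒴 = ∪_{z ∈ X_{α̲}} ∂g(z)`. -/
def Yset (f : E → EReal) (g h : E → ℝ) (x0 : E) (αl : ℝ) : Set E :=
  ⋃ z ∈ Xal f g h x0 αl, cvxSubdiff g z

/-- The set `S = {(x,y) ∈ X × 𝒴 : η(x,y) > 0}`. -/
def Sset (f : E → EReal) (g h : E → ℝ) (x0 : E) (αl : ℝ) : Set (E × E) :=
  {p | p.1 ∈ lvlSet f g h x0 ∧ p.2 ∈ Yset f g h x0 αl ∧ 0 < eta g p.1 p.2}

/-- The set of accumulation points of a sequence. -/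
def accSet {X : Type*} [TopologicalSpace X] (pt : ℕ → X) : Set X :=
  {p | ∃ σ : ℕ → ℕ, StrictMono σ ∧ Tendsto (pt ∘ σ) atTop (𝓝 p)}

/-- A polyhedral function: its epigraph is a finite intersection of closed half-spaces. -/
def IsPolyhedralFn (φ : E → EReal) : Prop :=
  ∃ (m : ℕ) (w : Fin m → E) (c b : Fin m → ℝ),
    ∀ (x : E) (a : ℝ), (φ x ≤ (a : EReal) ↔ ∀ i, ⟪w i, x⟫ + c i * a ≤ b i)


/-- The block product space. -/
abbrev BE {N : ℕ} (d : Fin N → ℕ) : Type :=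
  PiLp 2 fun i => EuclideanSpace ℝ (Fin (d i))

/-- Update the `i`-th block of `x`. -/
def bUpd {N : ℕ} {d : Fin N → ℕ} (x : BE d) (i : Fin N)
    (w : EuclideanSpace ℝ (Fin (d i))) : BE d :=
  WithLp.toLp 2 (Function.update x.ofLp i w)

/-- The block-separable function `f(x) = ∑ᵢ fᵢ(xᵢ)`. -/
def fsum {N : ℕ} {d : Fin N → ℕ} (fb : ∀ i, EuclideanSpace ℝ (Fin (d i)) → EReal)
    (x : BE d) : EReal := ∑ i, fb i (x i)

end Paper

open Metric

theorem IsCompact.exists_forall_lipschitzOnWith_ball {α β : Type*} [PseudoMetricSpace α]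
    [PseudoEMetricSpace β] {f : α → β} {s K : Set α} (hK : IsCompact K) (hs : IsOpen s)
    (hKs : K ⊆ s) (hf : LocallyLipschitzOn s f) :
    ∃ δ > 0, ∃ L, ∀ x ∈ K, ball x δ ⊆ s ∧ LipschitzOnWith L f (ball x δ) := by
  have hloc : ∀ x ∈ K, ∃ L, ∃ U, IsOpen U ∧ x ∈ U ∧ U ⊆ s ∧ LipschitzOnWith L f U := by
    intro x hx
    obtain ⟨L, t, ht, hL⟩ := hf (hKs hx)
    rw [hs.nhdsWithin_eq (hKs hx)] at ht
    exact ⟨L, interior (t ∩ s), isOpen_interior,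
      mem_interior_iff_mem_nhds.2 (inter_mem ht (hs.mem_nhds (hKs hx))),
      interior_subset.trans inter_subset_right, hL.mono (interior_subset.trans inter_subset_left)⟩
  choose! L U hUo hxU hUs hLU using hloc
  obtain ⟨t, htK, hcover⟩ :=
    hK.elim_nhds_subcover U fun x hx => (hUo x hx).mem_nhds (hxU x hx)
  obtain ⟨δ, hδ, hball⟩ := lebesgue_number_lemma_of_metric hK (c := fun z : t => U z)
    (fun z => hUo z (htK z z.2)) (by simpa only [iUnion_subtype] using hcover)
  refine ⟨δ, hδ, t.sup L, fun x hx => ?_⟩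
  obtain ⟨z, hz⟩ := hball x hx
  exact ⟨hz.trans (hUs z (htK z z.2)),
    ((hLU z (htK z z.2)).mono hz).weaken (Finset.le_sup z.2)⟩

section Descent

variable {E : Type*} [NormedAddCommGroup E] [InnerProductSpace ℝ E] [CompleteSpace E]

theorem le_add_inner_gradient_add_of_lipschitzOnWith {h : E → ℝ} {x e : E} {r : ℝ} {L : ℝ≥0}
    (hdiff : ∀ y ∈ ball x r, DifferentiableAt ℝ h y)
    (hlip : LipschitzOnWith L (gradient h) (ball x r)) (he : ‖e‖ < r) :
    h (x + e) ≤ h x + ⟪gradient h x, e⟫ + L / 2 * ‖e‖ ^ 2 := by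
  have hseg : ∀ t ∈ Icc (0 : ℝ) 1, x + t • e ∈ ball x r := fun t ht => by
    rw [mem_ball, dist_eq_norm, add_sub_cancel_left, norm_smul, Real.norm_eq_abs,
      abs_of_nonneg ht.1]
    nlinarith [norm_nonneg e, ht.2]
  set φ : ℝ → ℝ := fun t => h (x + t • e) - t * ⟪gradient h x, e⟫ - L / 2 * t ^ 2 * ‖e‖ ^ 2
  have hφ : ∀ t ∈ Icc (0 : ℝ) 1, HasDerivAt φ
      (⟪gradient h (x + t • e), e⟫ - ⟪gradient h x, e⟫ - L * t * ‖e‖ ^ 2) t := by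
    intro t ht
    have hline : HasDerivAt (fun s : ℝ => x + s • e) e t := by
      simpa using ((hasDerivAt_id t).smul_const e).const_add x
    have hcomp := (hdiff _ (hseg t ht)).hasGradientAt.hasFDerivAt.comp_hasDerivAt t hline
    rw [InnerProductSpace.toDual_apply_apply] at hcomp
    refine ((hcomp.sub ((hasDerivAt_id t).mul_const ⟪gradient h x, e⟫)).sub
      (((hasDerivAt_pow 2 t).const_mul (L / 2 : ℝ)).mul_const (‖e‖ ^ 2))).congr_deriv ?_
    simp only [Nat.cast_ofNat, one_mul]
    ring
  have hφ' : ∀ t ∈ Icc (0 : ℝ) 1,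
      ⟪gradient h (x + t • e), e⟫ - ⟪gradient h x, e⟫ - L * t * ‖e‖ ^ 2 ≤ 0 := by
    intro t ht
    rw [sub_nonpos]
    have hg : ‖gradient h (x + t • e) - gradient h x‖ ≤ L * (t * ‖e‖) := by
      have := hlip.dist_le_mul _ (hseg t ht) _ (mem_ball_self (he.trans_le' (norm_nonneg e)))
      rwa [dist_eq_norm, dist_eq_norm, add_sub_cancel_left, norm_smul, Real.norm_eq_abs,
        abs_of_nonneg ht.1] at this
    calc ⟪gradient h (x + t • e), e⟫ - ⟪gradient h x, e⟫
        = ⟪gradient h (x + t • e) - gradient h x, e⟫ := (inner_sub_left _ _ _).symm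
      _ ≤ ‖gradient h (x + t • e) - gradient h x‖ * ‖e‖ := real_inner_le_norm _ _
      _ ≤ L * (t * ‖e‖) * ‖e‖ := by gcongr
      _ = L * t * ‖e‖ ^ 2 := by ring
  have hanti : AntitoneOn φ (Icc 0 1) :=
    antitoneOn_of_hasDerivWithinAt_nonpos (convex_Icc 0 1)
      (fun t ht => (hφ t ht).continuousAt.continuousWithinAt)
      (fun t ht => (hφ t (interior_subset ht)).hasDerivWithinAt)
      (fun t ht => hφ' t (interior_subset ht))
  have := hanti (left_mem_Icc.2 zero_le_one) (right_mem_Icc.2 zero_le_one) zero_le_one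
  simp only [φ, zero_smul, add_zero, one_smul, zero_mul, sub_zero, one_mul, one_pow,
    ne_eq, OfNat.ofNat_ne_zero, not_false_eq_true, zero_pow, mul_zero] at this
  linarith

end Descent

theorem EReal.sum_ne_bot {ι : Type*} {s : Finset ι} {f : ι → EReal} (hf : ∀ i ∈ s, f i ≠ ⊥) :
    ∑ i ∈ s, f i ≠ ⊥ := by
  classical
  induction s using Finset.induction_on with
  | empty => simp
  | insert a t ha ih =>
    rw [Finset.sum_insert ha, EReal.add_ne_bot_iff]
    exact ⟨hf a (Finset.mem_insert_self a t), ih fun i hi => hf i (Finset.mem_insert_of_mem hi)⟩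

theorem EReal.ne_top_of_sum_ne_top {ι : Type*} {s : Finset ι} {f : ι → EReal} {i : ι}
    (hf : ∀ i ∈ s, f i ≠ ⊥) (hs : ∑ i ∈ s, f i ≠ ⊤) (hi : i ∈ s) : f i ≠ ⊤ := by
  classical
  intro htop
  rw [← Finset.add_sum_erase s f hi, htop,
    EReal.top_add_of_ne_bot (EReal.sum_ne_bot fun j hj => hf j (Finset.mem_of_mem_erase hj))]
    at hs
  exact hs rfl

theorem EReal.sum_eq_coe_sum_toReal {ι : Type*} {s : Finset ι} {f : ι → EReal}
    (hbot : ∀ i ∈ s, f i ≠ ⊥) (htop : ∀ i ∈ s, f i ≠ ⊤) :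
    ∑ i ∈ s, f i = ((∑ i ∈ s, (f i).toReal : ℝ) : EReal) := by
  classical
  induction s using Finset.induction_on with
  | empty => simp
  | insert a t ha ih =>
    rw [Finset.sum_insert ha, Finset.sum_insert ha, EReal.coe_add,
      EReal.coe_toReal (htop a (Finset.mem_insert_self a t)) (hbot a (Finset.mem_insert_self a t)),
      ih (fun i hi => hbot i (Finset.mem_insert_of_mem hi))
        (fun i hi => htop i (Finset.mem_insert_of_mem hi))]

theorem PiLp.inner_single_right {ι : Type*} [Fintype ι] [DecidableEq ι] {β : ι → Type*}
    [∀ i, NormedAddCommGroup (β i)] [∀ i, InnerProductSpace ℝ (β i)] (v : PiLp 2 β) (i : ι)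
    (a : β i) : ⟪v, PiLp.single 2 i a⟫ = ⟪v i, a⟫ := by
  rw [PiLp.inner_apply, Fintype.sum_eq_single i fun j hj => by simp [Pi.single_eq_of_ne hj]]
  simp

theorem exists_pos_forall_stepsize_lt {δ : ℝ} (hδ : 0 < δ) (K A C : ℝ) :
    ∃ abar > 0, ∀ α, 0 < α → α < abar →
      α * K < 1 ∧ 4 * α * A + 4 * α ^ 2 * C ^ 2 < δ ^ 2 := by
  have hev : ∀ᶠ α in 𝓝 (0 : ℝ), α * K < 1 ∧ 4 * α * A + 4 * α ^ 2 * C ^ 2 < δ ^ 2 :=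
    ((by fun_prop : Continuous fun α : ℝ => α * K).continuousAt.eventually_lt
      continuousAt_const (by simp)).and
    ((by fun_prop : Continuous fun α : ℝ => 4 * α * A + 4 * α ^ 2 * C ^ 2
      ).continuousAt.eventually_lt continuousAt_const (by simp; positivity))
  obtain ⟨ε, hε, hball⟩ := Metric.eventually_nhds_iff.1 hev
  exact ⟨ε, hε, fun α hα hαε => hball (by rwa [Real.dist_eq, sub_zero, abs_of_pos hα])⟩

namespace Paper

theorem LocLipGradOn.exists_uniform_descent {E : Type*} [NormedAddCommGroup E]
    [InnerProductSpace ℝ E] [CompleteSpace E] {h : E → ℝ} {Ω X : Set E} (hh : LocLipGradOn h Ω)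
    (hΩ : IsOpen Ω) (hX : IsCompact X) (hXΩ : X ⊆ Ω) :
    ∃ δ > 0, ∃ L : ℝ≥0, ∃ G, ∀ x ∈ X, ‖gradient h x‖ ≤ G ∧
      ∀ e, ‖e‖ < δ → h (x + e) ≤ h x + ⟪gradient h x, e⟫ + L / 2 * ‖e‖ ^ 2 := by
  have hloc : LocallyLipschitzOn Ω (gradient h) := fun x hx => by
    obtain ⟨U, hU, L, hL⟩ := hh.2 x hx
    refine ⟨L.toNNReal, Ω ∩ U, inter_mem_nhdsWithin Ω hU,
      LipschitzOnWith.of_dist_le_mul fun u hu v hv => ?_⟩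
    rw [dist_eq_norm, dist_eq_norm]
    exact (hL u ⟨hu.2, hu.1⟩ v ⟨hv.2, hv.1⟩).trans
      (mul_le_mul_of_nonneg_right (Real.le_coe_toNNReal L) (norm_nonneg _))
  obtain ⟨δ, hδ, L, hball⟩ := hX.exists_forall_lipschitzOnWith_ball hΩ hXΩ hloc
  obtain ⟨G, hG⟩ := hX.exists_bound_of_continuousOn (hloc.continuousOn.mono hXΩ)
  exact ⟨δ, hδ, L, G, fun x hx => ⟨hG x hx, fun e he =>
    le_add_inner_gradient_add_of_lipschitzOnWith (fun y hy => hh.1 y ((hball x hx).1 hy))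
      (hball x hx).2 he⟩⟩

section Fractional

variable {E : Type*} {f : E → EReal} {g h : E → ℝ} {x0 : E}

theorem Ffun_ne_bot (x : E) : Ffun f g h x ≠ ⊥ := by
  unfold Ffun
  split_ifs <;> simp

theorem ne_top_of_mem_lvlSet (hx0 : Ffun f g h x0 ≠ ⊤) {x : E} (hx : x ∈ lvlSet f g h x0) :
    g x ≠ 0 ∧ f x ≠ ⊤ := by
  by_contra hc
  rw [lvlSet, mem_ofPred_eq, Ffun, if_neg hc, top_le_iff] at hx
  exact hx0 hx

theorem toReal_add_le_of_mem_lvlSet (hg : ∀ x, 0 ≤ g x) (hx0 : Ffun f g h x0 ≠ ⊤) {x : E}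
    (hx : x ∈ lvlSet f g h x0) : (f x).toReal + h x ≤ (Ffun f g h x0).toReal * g x := by
  obtain ⟨hgx, hfx⟩ := ne_top_of_mem_lvlSet hx0 hx
  have hx0' := ne_top_of_mem_lvlSet hx0 (le_refl (Ffun f g h x0))
  simp only [lvlSet, mem_ofPred_eq, Ffun, if_pos (And.intro hgx hfx), if_pos hx0',
    EReal.coe_le_coe_iff, EReal.toReal_coe] at hx ⊢
  rwa [div_le_iff₀ ((hg x).lt_of_ne' hgx)] at hx

variable [NormedAddCommGroup E] [InnerProductSpace ℝ E]

theorem fconj_ne_bot (g : E → ℝ) (y : E) : fconj g y ≠ ⊥ :=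
  ne_bot_of_le_ne_bot (EReal.coe_ne_bot (⟪0, y⟫ - g 0))
    (le_iSup (fun x : E => ((⟪x, y⟫ : ℝ) : EReal) - ((g x : ℝ) : EReal)) 0)

theorem eta_add {x y : E} (hη : 0 < eta g x y) (e : E) :
    eta g (x + e) y = (((eta g x y).toReal + ⟪e, y⟫ : ℝ) : EReal) := by
  have htop : fconj g y ≠ ⊤ := by
    intro htop
    rw [eta, htop, EReal.sub_top] at hη
    exact not_lt_bot hη
  rw [eta, eta, ← EReal.coe_toReal htop (fconj_ne_bot g y), ← EReal.coe_sub, ← EReal.coe_sub,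
    EReal.toReal_coe, inner_add_left]
  ring_nf

theorem norm_le_of_mem_cvxSubdiff {z y : E} {C : ℝ} (hC : ∀ w ∈ closedBall z 1, |g w| ≤ C)
    (hy : y ∈ cvxSubdiff g z) : ‖y‖ ≤ 2 * C := by
  have hCz := hC z (mem_closedBall_self zero_le_one)
  rcases eq_or_ne y 0 with rfl | hy0
  · simpa using (abs_nonneg _).trans hCz
  have hny : 0 < ‖y‖ := norm_pos_iff.2 hy0
  have hw : z + ‖y‖⁻¹ • y ∈ closedBall z 1 := by
    rw [mem_closedBall, dist_eq_norm, add_sub_cancel_left, norm_smul, norm_inv, norm_norm,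
      inv_mul_cancel₀ hny.ne']
  have hsub := hy (z + ‖y‖⁻¹ • y)
  rw [add_sub_cancel_left, real_inner_smul_right, real_inner_self_eq_norm_sq,
    show ‖y‖⁻¹ * ‖y‖ ^ 2 = ‖y‖ by field_simp] at hsub
  linarith [le_abs_self (g (z + ‖y‖⁻¹ • y)), neg_abs_le (g z), hC _ hw]

theorem exists_norm_le_of_mem_cvxSubdiff [ProperSpace E] (hg : Continuous g) {A : Set E}
    (hA : Bornology.IsBounded A) : ∃ M, ∀ z ∈ A, ∀ y ∈ cvxSubdiff g z, ‖y‖ ≤ M := by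
  obtain ⟨R, hR⟩ := hA.subset_closedBall 0
  obtain ⟨C, hC⟩ := (isCompact_closedBall (0 : E) (R + 1)).exists_bound_of_continuousOn
    hg.continuousOn
  refine ⟨2 * C, fun z hz y hy => norm_le_of_mem_cvxSubdiff (fun w hw => ?_) hy⟩
  rw [← Real.norm_eq_abs]
  refine hC w ?_
  rw [mem_closedBall] at hw ⊢
  linarith [dist_triangle w z 0, mem_closedBall.1 (hR hz)]

theorem exists_norm_le_of_mem_Yset [ProperSpace E] (hg : Continuous g)
    (hX : IsCompact (lvlSet f g h x0)) (hne : (lvlSet f g h x0).Nonempty) (αl : ℝ) :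
    ∃ M, ∀ y ∈ Yset f g h x0 αl, ‖y‖ ≤ M := by
  set ρ := √(sSup (g '' lvlSet f g h x0) / αl)
  have hXal : Xal f g h x0 αl ⊆ cthickening ρ (lvlSet f g h x0) := fun z hz => by
    obtain ⟨w, hw, hzw⟩ := hX.exists_infDist_eq_dist hne z
    exact mem_cthickening_of_dist_le z w ρ _ hw (hzw ▸ Real.le_sqrt_of_sq_le hz)
  obtain ⟨M, hM⟩ := exists_norm_le_of_mem_cvxSubdiff hg (hX.isBounded.cthickening.subset hXal)
  refine ⟨M, fun y hy => ?_⟩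
  obtain ⟨z, hz, hyz⟩ := mem_iUnion₂.1 hy
  exact hM z hz y hyz

theorem toReal_add_le_of_mem_proxSet_scaleE {φ : E → EReal} (hφ : ∀ w, φ w ≠ ⊥) {α : ℝ}
    (hα : 0 < α) {v p z : E} (hv : φ v ≠ ⊤) (hz : z ∈ proxSet (scaleE α φ) (v - α • p)) :
    φ z ≠ ⊤ ∧ α * (φ z).toReal + ‖z - v‖ ^ 2 / 2 + α * ⟪z - v, p⟫ ≤ α * (φ v).toReal := by
  have hzv := hz v
  rw [scaleE, scaleE, ← EReal.coe_toReal hv (hφ v), ← EReal.coe_mul, ← EReal.coe_add] at hzv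
  have hztop : φ z ≠ ⊤ := by
    intro htop
    rw [htop, EReal.coe_mul_top_of_pos hα, EReal.top_add_coe, top_le_iff] at hzv
    exact EReal.coe_ne_top _ hzv
  refine ⟨hztop, ?_⟩
  rw [← EReal.coe_toReal hztop (hφ z), ← EReal.coe_mul, ← EReal.coe_add, EReal.coe_le_coe_iff,
    show z - (v - α • p) = (z - v) + α • p by abel, sub_sub_cancel, norm_add_sq_real,
    real_inner_smul_right] at hzv
  linarith

theorem norm_lt_of_three_point {d p : E} {α a b Cf Cp δ : ℝ} (hα : 0 < α) (hδ : 0 < δ)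
    (h : α * a + ‖d‖ ^ 2 / 2 + α * ⟪d, p⟫ ≤ α * b) (hba : b - a ≤ Cf) (hp : ‖p‖ ≤ Cp)
    (hαδ : 4 * α * Cf + 4 * α ^ 2 * Cp ^ 2 < δ ^ 2) : ‖d‖ < δ := by
  have hcs : α * -⟪d, p⟫ ≤ α * (‖d‖ * ‖p‖) :=
    mul_le_mul_of_nonneg_left ((neg_le_abs _).trans (abs_real_inner_le_norm d p)) hα.le
  -- AM-GM: `α ‖d‖ ‖p‖ ≤ ‖d‖² / 4 + α² ‖p‖²`
  have hsq : ‖d‖ ^ 2 ≤ 4 * α * (b - a) + 4 * α ^ 2 * ‖p‖ ^ 2 := by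
    nlinarith [sq_nonneg (‖d‖ - 2 * α * ‖p‖)]
  have hp2 : ‖p‖ ^ 2 ≤ Cp ^ 2 := pow_le_pow_left₀ (norm_nonneg p) hp 2
  refine lt_of_pow_lt_pow_left₀ 2 hδ.le ?_
  nlinarith

theorem add_le_mul_of_add_le_mul {d v : E} {Z σ Q c η : ℝ} (hZ : 0 ≤ Z) (hσ : 0 < σ)
    (hQ : 0 ≤ Q) (hQc : Q ≤ c) (hη : 0 < η)
    (h : Z + σ / 2 * ‖d‖ ^ 2 ≤ Q * (η + ⟪d, v⟫)) :
    Z + σ / 2 * ‖d‖ ^ 2 ≤ c * (η + ⟪d, v⟫) := by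
  rcases le_or_gt 0 (η + ⟪d, v⟫) with hpos | hneg
  · exact h.trans (mul_le_mul_of_nonneg_right hQc hpos)
  have hd : d = 0 := by
    have := mul_nonpos_of_nonneg_of_nonpos hQ hneg.le
    have : ‖d‖ ^ 2 ≤ 0 := by nlinarith
    exact norm_eq_zero.1 (pow_eq_zero_iff two_ne_zero |>.1 (le_antisymm this (sq_nonneg _)))
  rw [hd, inner_zero_left, add_zero] at hneg
  exact absurd hη hneg.not_gt

end Fractional

section Blocks

variable {N : ℕ} {d : Fin N → ℕ} {fb : ∀ i, EuclideanSpace ℝ (Fin (d i)) → EReal}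

theorem bUpd_sub_self (x : BE d) (i : Fin N) (w : EuclideanSpace ℝ (Fin (d i))) :
    bUpd x i w - x = PiLp.single 2 i (w - x i) := by
  ext j : 1
  rcases eq_or_ne j i with rfl | hj
  · simp [bUpd]
  · simp [bUpd, hj]

theorem sum_bUpd (φ : ∀ j, EuclideanSpace ℝ (Fin (d j)) → ℝ) (x : BE d) (i : Fin N)
    (w : EuclideanSpace ℝ (Fin (d i))) :
    ∑ j, φ j (bUpd x i w j) = ∑ j, φ j (x j) - φ i (x i) + φ i w := by
  have h := Finset.sum_update_of_mem (Finset.mem_univ i) (fun j => φ j (x j)) (φ i w)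
  simp only [← Function.apply_update φ] at h
  rw [Finset.sum_eq_add_sum_sdiff_singleton_of_mem (Finset.mem_univ i) (fun j => φ j (x j))]
  change ∑ j, φ j (Function.update x.ofLp i w j) = _
  rw [h]
  ring

theorem fsum_eq_coe (hbot : ∀ j w, fb j w ≠ ⊥) {x : BE d} (hx : fsum fb x ≠ ⊤) :
    (∀ j, fb j (x j) ≠ ⊤) ∧ fsum fb x = ((∑ j, (fb j (x j)).toReal : ℝ) : EReal) := by
  have htop : ∀ j, fb j (x j) ≠ ⊤ := fun j =>
    EReal.ne_top_of_sum_ne_top (f := fun j => fb j (x j)) (fun j _ => hbot j (x j)) hx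
      (Finset.mem_univ j)
  exact ⟨htop, EReal.sum_eq_coe_sum_toReal (fun j _ => hbot j _) (fun j _ => htop j)⟩

theorem fsum_bUpd (hbot : ∀ j w, fb j w ≠ ⊥) {x : BE d} (hx : fsum fb x ≠ ⊤) {i : Fin N}
    {w : EuclideanSpace ℝ (Fin (d i))} (hw : fb i w ≠ ⊤) :
    fsum fb (bUpd x i w) =
      ((∑ j, (fb j (x j)).toReal - (fb i (x i)).toReal + (fb i w).toReal : ℝ) : EReal) := by
  have htop : ∀ j, fb j (bUpd x i w j) ≠ ⊤ := by
    intro j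
    rcases eq_or_ne j i with rfl | hj
    · simpa [bUpd] using hw
    · simpa [bUpd, hj] using (fsum_eq_coe hbot hx).1 j
  rw [fsum, EReal.sum_eq_coe_sum_toReal (fun j _ => hbot j _) (fun j _ => htop j),
    sum_bUpd (fun j w => (fb j w).toReal)]

variable {g h : BE d → ℝ} {m : Fin N → ℝ}

theorem block_prox_step_bound (hm : ∀ j w, (m j : EReal) ≤ fb j w) {x y : BE d}
    (hfx : fsum fb x ≠ ⊤) {Q F₀ α δ B Cp : ℝ} (hα : 0 < α) (hδ : 0 < δ) (hQ0 : 0 ≤ Q)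
    (hQF : Q ≤ F₀) (hB : (fsum fb x).toReal ≤ B) (hCp : ‖gradient h x‖ + F₀ * ‖y‖ ≤ Cp)
    (hαδ : 4 * α * (B - ∑ j, m j) + 4 * α ^ 2 * Cp ^ 2 < δ ^ 2) {i : Fin N}
    {xi : EuclideanSpace ℝ (Fin (d i))}
    (hxi : xi ∈ proxSet (scaleE α (fb i)) (x i - α • (gradient h x) i + (α * Q) • y i)) :
    fb i xi ≠ ⊤ ∧
      α * (fb i xi).toReal + ‖xi - x i‖ ^ 2 / 2 +
          α * (⟪(gradient h x) i, xi - x i⟫ - Q * ⟪xi - x i, y i⟫) ≤ α * (fb i (x i)).toReal ∧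
      ‖xi - x i‖ < δ := by
  have hbot : ∀ j w, fb j w ≠ ⊥ := fun j w => ne_bot_of_le_ne_bot (EReal.coe_ne_bot _) (hm j w)
  have hmr : ∀ j w, fb j w ≠ ⊤ → m j ≤ (fb j w).toReal := fun j w hw => by
    have := hm j w
    rwa [← EReal.coe_toReal hw (hbot j w), EReal.coe_le_coe_iff] at this
  obtain ⟨hfin, hfsum⟩ := fsum_eq_coe hbot hfx
  set p := (gradient h x) i - Q • y i
  have hcenter : x i - α • (gradient h x) i + (α * Q) • y i = x i - α • p := by
    simp only [p, smul_sub, mul_smul]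
    abel
  rw [hcenter] at hxi
  obtain ⟨hxi_top, hprox⟩ := toReal_add_le_of_mem_proxSet_scaleE (hbot i) hα (hfin i) hxi
  have hpd : ⟪xi - x i, p⟫ = ⟪(gradient h x) i, xi - x i⟫ - Q * ⟪xi - x i, y i⟫ := by
    rw [inner_sub_right, real_inner_smul_right, real_inner_comm]
  refine ⟨hxi_top, hpd ▸ hprox, norm_lt_of_three_point hα hδ hprox ?_ ?_ hαδ⟩
  · have hsingle : (fb i (x i)).toReal - m i ≤ ∑ j, ((fb j (x j)).toReal - m j) :=
      Finset.single_le_sum (f := fun j => (fb j (x j)).toReal - m j)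
        (fun j _ => sub_nonneg.2 (hmr j _ (hfin j))) (Finset.mem_univ i)
    rw [Finset.sum_sub_distrib, ← EReal.toReal_coe (∑ j, (fb j (x j)).toReal), ← hfsum]
      at hsingle
    linarith [hmr i xi hxi_top]
  · calc ‖p‖ ≤ ‖(gradient h x) i‖ + Q * ‖y i‖ := by
          simpa [norm_smul, abs_of_nonneg hQ0] using norm_sub_le ((gradient h x) i) (Q • y i)
      _ ≤ ‖gradient h x‖ + F₀ * ‖y‖ := add_le_add (PiLp.norm_apply_le _ i)
          (mul_le_mul hQF (PiLp.norm_apply_le y i) (norm_nonneg _) (hQ0.trans hQF))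
      _ ≤ Cp := hCp

theorem block_prox_step_sufficient_decrease (hm : ∀ j w, (m j : EReal) ≤ fb j w)
    (hζ : ∀ x, fsum fb x ≠ ⊤ → 0 ≤ zeta (fsum fb) h x)
    {x y : BE d} (hfx : fsum fb x ≠ ⊤) (hη : 0 < eta g x y)
    {δ L σ α B F₀ Cp : ℝ} (hδ : 0 < δ) (hσ : 0 < σ) (hα : 0 < α) (hαL : α * (L + σ) < 1)
    (hαδ : 4 * α * (B - ∑ j, m j) + 4 * α ^ 2 * Cp ^ 2 < δ ^ 2)
    (hdesc : ∀ e : BE d, ‖e‖ < δ → h (x + e) ≤ h x + ⟪gradient h x, e⟫ + L / 2 * ‖e‖ ^ 2)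
    (hB : (fsum fb x).toReal ≤ B) (hQF : Qfun (fsum fb) g h x y ≤ F₀)
    (hCp : ‖gradient h x‖ + F₀ * ‖y‖ ≤ Cp) {i : Fin N} {xi : EuclideanSpace ℝ (Fin (d i))}
    (hxi : xi ∈ proxSet (scaleE α (fb i))
      (x i - α • (gradient h x) i + (α * (Qfun (fsum fb) g h x y).toReal) • y i))
    {c : ℝ} (hc : Qfun (fsum fb) g h x y ≤ c) :
    zeta (fsum fb) h (bUpd x i xi) + ((σ / 2 * ‖bUpd x i xi - x‖ ^ 2 : ℝ) : EReal) ≤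
      (c : EReal) * eta g (bUpd x i xi) y := by
  have hbot : ∀ j w, fb j w ≠ ⊥ := fun j w => ne_bot_of_le_ne_bot (EReal.coe_ne_bot _) (hm j w)
  have hfsum := (fsum_eq_coe hbot hfx).2
  set F := ∑ j, (fb j (x j)).toReal
  set η := (eta g x y).toReal
  have hη_eq : eta g x y = η := by simpa using eta_add hη 0
  have hηpos : 0 < η := by exact_mod_cast hη_eq ▸ hη
  have hQ_eq : Qfun (fsum fb) g h x y = ((F + h x) / η : ℝ) := by
    rw [Qfun, if_pos ⟨hfx, hη⟩, hfsum, EReal.toReal_coe]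
  rw [hQ_eq, EReal.coe_le_coe_iff] at hQF hc
  rw [hQ_eq, EReal.toReal_coe] at hxi
  set Q := (F + h x) / η
  have hQ0 : 0 ≤ Q := by
    have := hζ x hfx
    rw [zeta, hfsum, ← EReal.coe_add] at this
    exact div_nonneg (EReal.coe_nonneg.1 this) hηpos.le
  obtain ⟨hxi_top, hprox, hdδ⟩ := block_prox_step_bound hm hfx hα hδ hQ0 hQF hB hCp hαδ hxi
  set dd := xi - x i
  have he := bUpd_sub_self x i xi
  have hh : h (bUpd x i xi) ≤ h x + ⟪(gradient h x) i, dd⟫ + L / 2 * ‖dd‖ ^ 2 := by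
    have := hdesc (bUpd x i xi - x) (by rwa [he, PiLp.norm_single])
    rwa [add_sub_cancel, he, PiLp.inner_single_right, PiLp.norm_single] at this
  have hη_plus : eta g (bUpd x i xi) y = ((η + ⟪dd, y i⟫ : ℝ) : EReal) := by
    have := eta_add hη (bUpd x i xi - x)
    rwa [add_sub_cancel, he, real_inner_comm, PiLp.inner_single_right, real_inner_comm] at this
  have hf_plus := fsum_bUpd hbot hfx hxi_top
  have hζ_plus := hζ _ (hf_plus ▸ EReal.coe_ne_top _)
  rw [zeta, hf_plus, ← EReal.coe_add] at hζ_plus ⊢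
  rw [hη_plus, he, PiLp.norm_single, ← EReal.coe_add, ← EReal.coe_mul, EReal.coe_le_coe_iff]
  refine add_le_mul_of_add_le_mul (EReal.coe_nonneg.1 hζ_plus) hσ hQ0 hc hηpos ?_
  have hkey : F + h x = Q * η := (div_mul_cancel₀ _ hηpos.ne').symm
  -- the step `α (L + σ) < 1` absorbs the curvature term of the descent inequality
  have hcurv : 0 ≤ (1 - α * (L + σ)) * ‖dd‖ ^ 2 := mul_nonneg (by linarith) (sq_nonneg _)
  refine le_of_mul_le_mul_left ?_ hα
  nlinarith [mul_le_mul_of_nonneg_left hh hα.le]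

end Blocks

theorem statement13_general {N : ℕ} {d : Fin N → ℕ}
    (fb : ∀ i, EuclideanSpace ℝ (Fin (d i)) → EReal)
    (g h : BE d → ℝ)
    (hfb_bdd : ∀ i, ∃ m : ℝ, ∀ w, (m : EReal) ≤ fb i w)
    (hb : Blanket (fsum fb) g h)
    (x0 : BE d) (hx0 : Ffun (fsum fb) g h x0 ≠ ⊤)
    (hcomp : IsCompact (lvlSet (fsum fb) g h x0))
    (αl : ℝ) (σ : ℝ) (hσ : 0 < σ) :
    ∃ abar > (0 : ℝ), ∀ x y : BE d, (x, y) ∈ Sset (fsum fb) g h x0 αl →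
      Qfun (fsum fb) g h x y ≤ Ffun (fsum fb) g h x0 →
      ∀ α : ℝ, 0 < α → α < abar → ∀ i : Fin N,
        ∀ xi ∈ proxSet (scaleE α (fb i))
            (x i - α • (gradient h x) i + (α * (Qfun (fsum fb) g h x y).toReal) • y i),
          ∀ c : ℝ, Qfun (fsum fb) g h x y ≤ (c : EReal) →
            zeta (fsum fb) h (bUpd x i xi) +
                ((σ / 2 * ‖bUpd x i xi - x‖ ^ 2 : ℝ) : EReal) ≤
              (c : EReal) * eta g (bUpd x i xi) y := by
  choose m hm using hfb_bdd
  set X := lvlSet (fsum fb) g h x0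
  set F₀ := max (Ffun (fsum fb) g h x0).toReal 0
  have hg : Continuous g := continuousOn_univ.1 (hb.g_convex.continuousOn isOpen_univ)
  have hXΩ : X ⊆ {x | g x ≠ 0} := fun x hx => (ne_top_of_mem_lvlSet hx0 hx).1
  obtain ⟨δ, hδ, L, G, hdescX⟩ :=
    hb.h_diff.exists_uniform_descent (isOpen_ne_fun hg continuous_const) hcomp hXΩ
  obtain ⟨M, hM⟩ := exists_norm_le_of_mem_Yset hg hcomp ⟨x0, le_refl (Ffun (fsum fb) g h x0)⟩ αl
  obtain ⟨B, hB⟩ := hcomp.bddAbove_image (f := fun x => (Ffun (fsum fb) g h x0).toReal * g x - h x)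
    ((continuousOn_const.mul hg.continuousOn).sub
      fun x hx => (hb.h_diff.1 x (hXΩ hx)).continuousAt.continuousWithinAt)
  set Cp := G + F₀ * M
  obtain ⟨abar, habar, hsmall⟩ := exists_pos_forall_stepsize_lt hδ (L + σ) (B - ∑ j, m j) Cp
  refine ⟨abar, habar, fun x y hS hQ α hα hαa i xi hxi c hc => ?_⟩
  obtain ⟨hxX, hyY, hη⟩ := hS
  obtain ⟨hGx, hdesc⟩ := hdescX x hxX
  have hfB : (fsum fb x).toReal ≤ B := by
    linarith [toReal_add_le_of_mem_lvlSet hb.g_nonneg hx0 hxX, hB (mem_image_of_mem _ hxX)]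
  have hQF₀ : Qfun (fsum fb) g h x y ≤ F₀ := hQ.trans <| by
    rw [← EReal.coe_toReal hx0 (Ffun_ne_bot _)]
    exact EReal.coe_le_coe_iff.2 (le_max_left _ _)
  exact block_prox_step_sufficient_decrease hm hb.zeta_nonneg (ne_top_of_mem_lvlSet hx0 hxX).2
    hη hδ hσ hα (hsmall α hα hαa).1 (hsmall α hα hαa).2 hdesc hfB hQF₀
    (add_le_add hGx (mul_le_mul_of_nonneg_left (hM y hyY) (le_max_right _ _))) hxi hc

/-- Finite termination of the line search: sufficiently small step sizes satisfy
the sufficient-decrease inequality uniformly over `S`. -/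
theorem statement13 {N : ℕ} {d : Fin N → ℕ}
    (fb : ∀ i, EuclideanSpace ℝ (Fin (d i)) → EReal)
    (g h : BE d → ℝ)
    (hfb_proper : ∀ i, Proper (fb i)) (hfb_lsc : ∀ i, LowerSemicontinuous (fb i))
    (hfb_bdd : ∀ i, ∃ m : ℝ, ∀ w, (m : EReal) ≤ fb i w)
    (hb : Blanket (fsum fb) g h)
    (x0 : BE d) (hx0 : Ffun (fsum fb) g h x0 ≠ ⊤)
    (hne : (lvlSet (fsum fb) g h x0).Nonempty)
    (hcomp : IsCompact (lvlSet (fsum fb) g h x0))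
    (αl : ℝ) (hαl : 0 < αl) (σ : ℝ) (hσ : 0 < σ) :
    ∃ abar > (0 : ℝ), ∀ x y : BE d, (x, y) ∈ Sset (fsum fb) g h x0 αl →
      Qfun (fsum fb) g h x y ≤ Ffun (fsum fb) g h x0 →
      ∀ α : ℝ, 0 < α → α < abar → ∀ i : Fin N,
        ∀ xi ∈ proxSet (scaleE α (fb i))
            (x i - α • (gradient h x) i + (α * (Qfun (fsum fb) g h x y).toReal) • y i),
          ∀ c : ℝ, Qfun (fsum fb) g h x y ≤ (c : EReal) →
            zeta (fsum fb) h (bUpd x i xi) +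
                ((σ / 2 * ‖bUpd x i xi - x‖ ^ 2 : ℝ) : EReal) ≤
              (c : EReal) * eta g (bUpd x i xi) y :=
  statement13_general fb g h hfb_bdd hb x0 hx0 hcomp αl σ hσ

end Paper
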